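/- For every positive integer k, the sequence c^{(k)} dominates π^{(k)} entrywise: c^{(k)}_j ≥ π^{(k)}_j for every index j. -/

import Mathlib

noncomputable def rho : ℝ := 1 + Real.sqrt 2

noncomputable def silver (t : ℕ) : ℝ := rho ^ ((padicValNat 2 (t + 1) : ℤ) - 1) + 1

/-- The auxiliary sequence c^{(k)} (zero-based indexing of the 2^k − 1 entries):
c^{(1)} = [2(ρ−1)],
c^{(k+1)} = [π^{(k)}, (1+1/ρ^k)(ρ^{k−1}+1), ρ c^{(k)} − (ρ−1−1/ρ^k) π^{(k)}]. -/
noncomputable def csil : ℕ → ℕ → ℝ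
  | 0, _ => 0
  | 1, _ => 2 * (rho - 1)
  | (k+2), j =>
      let n := 2 ^ (k + 1) - 1
      if j < n then silver j
      else if j = n then (1 + rho ^ (-(k + 1 : ℤ))) * (rho ^ k + 1)
      else rho * csil (k+1) (j - n - 1) - (rho - 1 - rho ^ (-(k + 1 : ℤ))) * silver (j - n - 1)

lemma sqrt2_pos : (1:ℝ) ≤ Real.sqrt 2 := by
  nlinarith [Real.sq_sqrt (by norm_num : (2:ℝ) ≥ 0), Real.sqrt_nonneg 2]

lemma rho_pos : (0:ℝ) < rho := by
  unfold rho; nlinarith [sqrt2_pos]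

lemma silver_pos (t : ℕ) : 0 < silver t := by
  unfold silver
  have := zpow_pos rho_pos ((padicValNat 2 (t + 1) : ℤ) - 1)
  linarith

lemma padic_shift (k j : ℕ) (h : j + 1 < 2 ^ (k + 1)) :
    padicValNat 2 (j + 2 ^ (k + 1) + 1) = padicValNat 2 (j + 1) := by
  haveI : Fact (Nat.Prime 2) := ⟨Nat.prime_two⟩
  set a := j + 1 with ha
  set v := padicValNat 2 a with hv
  have ha0 : a ≠ 0 := by omega
  have hdvd : 2 ^ v ∣ a := pow_padicValNat_dvd
  have hvk : v < k + 1 := by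
    by_contra hc
    push_neg at hc
    have : 2 ^ (k+1) ≤ 2 ^ v := Nat.pow_le_pow_right (by norm_num) hc
    have := Nat.le_of_dvd (by omega) hdvd
    omega
  have hsum : j + 2 ^ (k + 1) + 1 = a + 2 ^ (k+1) := by omega
  rw [hsum]
  have hs0 : a + 2 ^ (k+1) ≠ 0 := by positivity
  apply le_antisymm
  · by_contra hc
    push_neg at hc
    have h1 : 2 ^ (v + 1) ∣ a + 2 ^ (k+1) :=
      (padicValNat_dvd_iff_le hs0).mpr hc
    have h2 : 2 ^ (v + 1) ∣ 2 ^ (k+1) := pow_dvd_pow 2 (by omega)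
    have h3 : 2 ^ (v + 1) ∣ a := by
      have := Nat.dvd_sub h1 h2
      simpa using this
    exact pow_succ_padicValNat_not_dvd ha0 h3
  · exact (padicValNat_dvd_iff_le hs0).mp
      (Nat.dvd_add hdvd (pow_dvd_pow 2 (by omega)))

lemma silver_shift (k j : ℕ) (h : j + 1 < 2 ^ (k + 1)) :
    silver (j + 2 ^ (k + 1)) = silver j := by
  unfold silver
  rw [padic_shift k j h]

/-- c^{(k)} dominates π^{(k)} entrywise. -/
theorem csil_ge_silver (k : ℕ) (hk : 1 ≤ k) :
    ∀ j < 2 ^ k - 1, silver j ≤ csil k j := by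
  induction k, hk using Nat.le_induction with
  | base =>
    intro j hj
    interval_cases j
    show silver 0 ≤ csil 1 0
    have h2 : Real.sqrt 2 * Real.sqrt 2 = 2 := Real.mul_self_sqrt (by norm_num)
    have hm : rho * (Real.sqrt 2 - 1) = 1 := by unfold rho; nlinarith
    have hinv : rho ^ (-1 : ℤ) = Real.sqrt 2 - 1 := by
      rw [zpow_neg_one]
      exact inv_eq_of_mul_eq_one_right hm
    have hs : silver 0 = Real.sqrt 2 := by
      unfold silver
      norm_num
      rw [inv_eq_of_mul_eq_one_right hm]; ring
    have hc : csil 1 0 = 2 * (rho - 1) := rfl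
    rw [hs, hc]
    unfold rho
    nlinarith [sqrt2_pos]
  | succ k hk ih =>
    obtain ⟨m, rfl⟩ : ∃ m, k = m + 1 := ⟨k - 1, by omega⟩
    intro j hj
    show silver j ≤ csil (m + 2) j
    rw [csil]
    split_ifs with h1 h2
    · exact le_refl _
    · -- j = 2^(m+1) - 1
      subst h2
      have hpow : (0:ℕ) < 2 ^ (m+1) := Nat.pow_pos (by norm_num)
      have hval : padicValNat 2 (2 ^ (m + 1) - 1 + 1) = m + 1 := by
        haveI : Fact (Nat.Prime 2) := ⟨Nat.prime_two⟩
        rw [Nat.sub_add_cancel hpow]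
        exact padicValNat.prime_pow _
      have hs : silver (2 ^ (m + 1) - 1) = rho ^ m + 1 := by
        unfold silver
        rw [hval, show (((m+1:ℕ)):ℤ) - 1 = (m:ℤ) by push_cast; ring, zpow_natCast]
      rw [hs]
      have hε : 0 < rho ^ (-(m + 1 : ℤ)) := zpow_pos rho_pos _
      have hpm : (0:ℝ) < rho ^ m + 1 := by have := pow_pos rho_pos m; linarith
      nlinarith
    · -- recursive case
      have hpow : (0:ℕ) < 2 ^ (m+1) := Nat.pow_pos (by norm_num)
      have hjge : 2 ^ (m+1) ≤ j := by omega
      set j' := j - (2 ^ (m + 1) - 1) - 1 with hj'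
      have hjeq : j = j' + 2 ^ (m+1) := by
        simp [hj']; omega
      have hj'lt : j' < 2 ^ (m+1) - 1 := by
        have : (2:ℕ) ^ (m+2) = 2 * 2 ^ (m+1) := by ring
        omega
      have hshift : silver j = silver j' := by
        rw [hjeq]; exact silver_shift m j' (by omega)
      have hIH : silver j' ≤ csil (m+1) j' := ih j' hj'lt
      have hε : 0 < rho ^ (-(m + 1 : ℤ)) := zpow_pos rho_pos _
      have hsp : 0 < silver j' := silver_pos j'
      rw [hshift]
      nlinarith [mul_le_mul_of_nonneg_left hIH rho_pos.le, mul_pos hε hsp]
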